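/- arXiv:1707.04183 — 2 statements merged into one kernel-verified Lean document; each statement's English description precedes it below -/
import Mathlib

section
/- For the ergodic symmetric measure $\mu$ on constrained configurations, if almost surely there are no infinite contours, then almost surely there are no infinite clusters. -/
open MeasureTheory

/-- Two vertices are in the same cluster of the site configuration `ω` if they are joined
by a walk all of whose vertices carry the same state. -/
def sameCluster {V : Type*} (G : SimpleGraph V) (ω : V → Bool) (x y : V) : Prop :=
  ∃ w : G.Walk x y, ∀ v ∈ w.support, ω v = ω x

/-- The cluster of a vertex `x` in the site configuration `ω`. -/
def clusterOf {V : Type*} (G : SimpleGraph V) (ω : V → Bool) (x : V) : Set V :=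
  {y | sameCluster G ω x y}

/-- `x` lies in an infinite cluster of state `b`. -/
def inInfiniteCluster {V : Type*} (G : SimpleGraph V) (ω : V → Bool) (b : Bool)
    (x : V) : Prop :=
  ω x = b ∧ (clusterOf G ω x).Infinite

/-!
The 0-1 flip maps the event of an infinite 0-cluster onto that of an infinite 1-cluster, so the
two have the same probability; both events are invariant under graph automorphisms, so by
ergodicity that probability is 0 or 1. Were it 1, both kinds of infinite cluster would coexist
almost surely, and by Lemma io so would an infinite contour.
-/

lemma MeasureTheory.prob_inter_eq_one {Ω : Type*} [MeasurableSpace Ω] {μ : Measure Ω}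
    [IsProbabilityMeasure μ] {s t : Set Ω} (hs : MeasurableSet s) (ht : MeasurableSet t)
    (hμs : μ s = 1) (hμt : μ t = 1) : μ (s ∩ t) = 1 :=
  (mem_ae_iff_prob_eq_one (hs.inter ht)).1 <|
    Filter.inter_mem ((mem_ae_iff_prob_eq_one hs).2 hμs) ((mem_ae_iff_prob_eq_one ht).2 hμt)

section Clusters

variable {V W : Type*} (G : SimpleGraph V) {H : SimpleGraph W}

lemma clusterOf_not (ω : V → Bool) (x : V) :
    clusterOf G (fun v => !ω v) x = clusterOf G ω x := by
  ext y
  simp only [clusterOf, sameCluster, Set.mem_ofPred_eq, Bool.not_inj_iff]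

lemma inInfiniteCluster_not_iff (ω : V → Bool) (b : Bool) (x : V) :
    inInfiniteCluster G (fun v => !ω v) b x ↔ inInfiniteCluster G ω (!b) x := by
  simp only [inInfiniteCluster, clusterOf_not, Bool.not_eq_eq_eq_not]

lemma image_clusterOf_comp_subset (f : H →g G) (ω : V → Bool) (x : W) :
    f '' clusterOf H (ω ∘ f) x ⊆ clusterOf G ω (f x) := by
  rintro _ ⟨y, ⟨w, hw⟩, rfl⟩
  refine ⟨w.map f, fun v hv => ?_⟩
  rw [SimpleGraph.Walk.support_map] at hv
  obtain ⟨u, hu, rfl⟩ := List.mem_map.mp hv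
  exact hw u hu

lemma inInfiniteCluster_of_comp (g : H ≃g G) {ω : V → Bool} {b : Bool} {x : W}
    (h : inInfiniteCluster H (ω ∘ g) b x) : inInfiniteCluster G ω b (g x) :=
  ⟨h.1, (h.2.image g.injective.injOn).mono (image_clusterOf_comp_subset G g.toHom ω x)⟩

lemma exists_inInfiniteCluster_comp_iff (g : H ≃g G) (ω : V → Bool) (b : Bool) :
    (∃ x, inInfiniteCluster H (ω ∘ g) b x) ↔ ∃ x, inInfiniteCluster G ω b x := by
  refine ⟨fun ⟨x, hx⟩ => ⟨g x, inInfiniteCluster_of_comp G g hx⟩, fun ⟨x, hx⟩ => ?_⟩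
  have hω : (ω ∘ g) ∘ g.symm = ω := by ext v; simp
  rw [← hω] at hx
  exact ⟨g.symm x, inInfiniteCluster_of_comp H g.symm hx⟩

def infiniteClusterEvent (b : Bool) : Set (V → Bool) :=
  {ω | ∃ x, inInfiniteCluster G ω b x}

lemma preimage_not_infiniteClusterEvent (b : Bool) :
    (fun ω v => !ω v) ⁻¹' infiniteClusterEvent G b = infiniteClusterEvent G (!b) := by
  ext ω
  simp only [infiniteClusterEvent, Set.mem_preimage, Set.mem_ofPred_eq, inInfiniteCluster_not_iff]

lemma preimage_comp_infiniteClusterEvent (g : G ≃g G) (b : Bool) :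
    (fun ω => ω ∘ g) ⁻¹' infiniteClusterEvent G b = infiniteClusterEvent G b :=
  Set.ext fun ω => exists_inInfiniteCluster_comp_iff G g ω b

end Clusters

/-- For an ergodic, `0`-`1`-symmetric measure `μ` on constrained
configurations: assuming the combinatorial fact (Lemma io) that coexistence of an
infinite 0-cluster and an infinite 1-cluster forces an infinite contour, if `μ`-a.s.
there are no infinite contours then `μ`-a.s. there are no infinite clusters. -/
theorem no_infinite_contours_implies_no_infinite_clusters {V : Type*} (G : SimpleGraph V)
    (hasInfiniteContour : (V → Bool) → Prop)
    (hio : ∀ ω : V → Bool, (∃ x, inInfiniteCluster G ω false x) →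
      (∃ x, inInfiniteCluster G ω true x) → hasInfiniteContour ω)
    (μ : Measure (V → Bool)) [IsProbabilityMeasure μ]
    (herg : ∀ A : Set (V → Bool), MeasurableSet A →
      (∀ g : G ≃g G, (fun ω => ω ∘ ⇑g) ⁻¹' A = A) → μ A = 0 ∨ μ A = 1)
    (hflip : μ.map (fun ω v => !(ω v)) = μ)
    (hmeas : ∀ b : Bool, MeasurableSet {ω : V → Bool | ∃ x, inInfiniteCluster G ω b x})
    (hnocontour : μ {ω | hasInfiniteContour ω} = 0) :
    μ {ω | ∃ b x, inInfiniteCluster G ω b x} = 0 := by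
  set E := infiniteClusterEvent G
  have hsymm : μ (E true) = μ (E false) := by
    have hpres : MeasurePreserving (fun (ω : V → Bool) v => !ω v) μ μ := ⟨by fun_prop, hflip⟩
    calc μ (E true) = μ ((fun ω v => !ω v) ⁻¹' E false) := by
          rw [preimage_not_infiniteClusterEvent, Bool.not_false]
      _ = μ (E false) := hpres.measure_preimage (hmeas false).nullMeasurableSet
  have hfalse : μ (E false) = 0 := by
    have hinv (g : G ≃g G) := preimage_comp_infiniteClusterEvent G g false
    refine (herg _ (hmeas false) hinv).resolve_right fun h1 => ?_
    have hone : μ (E false ∩ E true) = 1 :=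
      prob_inter_eq_one (hmeas false) (hmeas true) h1 (hsymm.trans h1)
    have hzero : μ (E false ∩ E true) = 0 :=
      measure_mono_null (fun ω hω => hio ω hω.1 hω.2) hnocontour
    exact one_ne_zero (hone.symm.trans hzero)
  have hunion : {ω | ∃ b x, inInfiniteCluster G ω b x} = ⋃ b, E b := by
    ext ω
    simp [E, infiniteClusterEvent]
  rw [hunion, measure_iUnion_null_iff]
  rintro (_ | _)
  exacts [hfalse, hsymm.trans hfalse]
end

section
/- Let $\mu_1,\mu_2$ be strictly positive probability measures on subsets of a finite edge set $E$ such that $\mu_2(\omega\cup\{e\})\mu_1(\omega\setminus\{e\})\geq\mu_1(\omega\cup\{e\})\mu_2(\omega\setminus\{e\})$ for all $\omega$ and $e$, and such that one of $\mu_1,\mu_2$ satisfies the FKG lattice condition $\mu(\omega\cup\{e,f\})\mu(\omega\setminus\{e,f\})\geq\mu(\omega\cup\{e\}\setminus\{f\})\mu(\omega\cup\{f\}\setminus\{e\})$ for all $\omega$ and distinct $e,f$. Then the Holley condition $\mu_2(\max(\omega_1,\omega_2))\mu_1(\min(\omega_1,\omega_2))\geq\mu_1(\omega_1)\mu_2(\omega_2)$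 holds for all $\omega_1,\omega_2$; consequently $\mu_1$ is stochastically dominated by $\mu_2$. -/
section Aux

variable {E : Type*} [Fintype E] [DecidableEq E]

/-- From `a \ b = {e}` we get `a.erase e = a ∩ b`. -/
private lemma erase_eq_inter {a b : Finset E} {e : E} (h : a \ b = {e}) :
    a.erase e = a ∩ b := by
  have hx : ∀ x, x ∈ a ∧ x ∉ b ↔ x = e := by
    intro x
    have := Finset.ext_iff.1 h x
    simpa [Finset.mem_sdiff] using this
  ext x
  simp only [Finset.mem_erase, Finset.mem_inter]
  constructor
  · rintro ⟨hxe, hxa⟩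
    refine ⟨hxa, ?_⟩
    by_contra hxb
    exact hxe ((hx x).1 ⟨hxa, hxb⟩)
  · rintro ⟨hxa, hxb⟩
    refine ⟨?_, hxa⟩
    rintro rfl
    exact ((hx x).2 rfl).2 hxb

private lemma mem_of_sdiff_singleton {a b : Finset E} {e : E} (h : a \ b = {e}) :
    e ∈ a ∧ e ∉ b := by
  have : e ∈ a \ b := h ▸ Finset.mem_singleton_self e
  simpa [Finset.mem_sdiff] using this

/-- The pairwise FKG lattice condition implies full log-supermodularity, singleton case:
induction on `(b \ a).card` where `(a \ b).card = 1`. -/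
private lemma pairwise_to_full_one (μ : Finset E → ℝ) (hpos : ∀ ω, 0 < μ ω)
    (hp : ∀ (ω : Finset E) (e f : E), e ≠ f →
        μ (insert e (ω.erase f)) * μ (insert f (ω.erase e)) ≤
          μ (insert e (insert f ω)) * μ ((ω.erase e).erase f)) :
    ∀ (m : ℕ) (a b : Finset E), (a \ b).card = 1 → (b \ a).card = m →
      μ a * μ b ≤ μ (a ∩ b) * μ (a ∪ b) := by
  intro m
  induction m using Nat.strong_induction_on with
  | _ m IH =>
    intro a b hab hba
    obtain ⟨e, he⟩ := Finset.card_eq_one.1 hab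
    obtain ⟨hea, heb⟩ := mem_of_sdiff_singleton he
    match m, hba with
    | 0, hba =>
      -- b ⊆ a
      have hsub : b ⊆ a := by
        intro x hx
        by_contra hxa
        have : x ∈ b \ a := Finset.mem_sdiff.2 ⟨hx, hxa⟩
        simp [Finset.card_eq_zero.1 hba] at this
      rw [Finset.inter_eq_right.2 hsub, Finset.union_eq_left.2 hsub, mul_comm]
    | 1, hba =>
      obtain ⟨f, hf⟩ := Finset.card_eq_one.1 hba
      obtain ⟨hfb, hfa⟩ := mem_of_sdiff_singleton hf
      have hef : e ≠ f := by rintro rfl; exact heb hfb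
      set c := a ∩ b with hc
      have hec : e ∉ c := by simp [hc, heb]
      have hfc : f ∉ c := by simp [hc, hfa]
      have ha : insert e c = a := by
        rw [hc, ← erase_eq_inter he, Finset.insert_erase hea]
      have hb : insert f c = b := by
        have : b \ a = {f} := hf
        rw [hc, Finset.inter_comm, ← erase_eq_inter this, Finset.insert_erase hfb]
      have hcup : insert e (insert f c) = a ∪ b := by
        ext x
        simp only [Finset.mem_insert, Finset.mem_union, hc, Finset.mem_inter]
        constructor
        · rintro (rfl | rfl | ⟨h1, h2⟩)
          · exact Or.inl hea
          · exact Or.inr hfb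
          · exact Or.inl h1
        · rintro (hx | hx)
          · by_cases hxe : x = e
            · exact Or.inl hxe
            · right; right
              refine ⟨hx, ?_⟩
              by_contra hxb
              have : x ∈ a \ b := Finset.mem_sdiff.2 ⟨hx, hxb⟩
              rw [he] at this
              exact hxe (Finset.mem_singleton.1 this)
          · by_cases hxf : x = f
            · exact Or.inr (Or.inl hxf)
            · right; right
              refine ⟨?_, hx⟩
              by_contra hxa
              have : x ∈ b \ a := Finset.mem_sdiff.2 ⟨hx, hxa⟩
              rw [hf] at this
              exact hxf (Finset.mem_singleton.1 this)
      have := hp c e f hef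
      rw [Finset.erase_eq_of_notMem hfc, Finset.erase_eq_of_notMem hec,
        Finset.erase_eq_of_notMem hfc, hcup, ha, hb] at this
      linarith [this]
    | (m + 2), hba =>
      -- pick f ∈ b \ a
      have hne : (b \ a).Nonempty := by
        rw [← Finset.card_pos, hba]; omega
      obtain ⟨f, hfmem⟩ := hne
      obtain ⟨hfb, hfa⟩ := Finset.mem_sdiff.1 hfmem
      set b' := b.erase f with hb'
      have hb'b : b' ⊆ b := Finset.erase_subset _ _
      have h1card : (a \ b').card = 1 := by
        have : a \ b' = a \ b := by
          ext x
          simp only [hb', Finset.mem_sdiff, Finset.mem_erase]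
          constructor
          · rintro ⟨hxa, hx⟩
            exact ⟨hxa, fun hxb => hx ⟨fun h => hfa (h ▸ hxa), hxb⟩⟩
          · rintro ⟨hxa, hxb⟩
            exact ⟨hxa, fun h => hxb h.2⟩
        rw [this, hab]
      have h2card : (b' \ a).card = m + 1 := by
        have : b' \ a = (b \ a).erase f := by
          ext x; simp only [hb', Finset.mem_sdiff, Finset.mem_erase]; tauto
        rw [this, Finset.card_erase_of_mem hfmem, hba]
        omega
      -- induction hypothesis on (a, b')
      have h1 := IH (m + 1) (by omega) a b' h1card h2card
      -- case m' = 1 on (a ∪ b', b)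
      have h3card : ((a ∪ b') \ b).card = 1 := by
        have : (a ∪ b') \ b = a \ b := by
          ext x
          simp only [hb', Finset.mem_sdiff, Finset.mem_union, Finset.mem_erase]
          tauto
        rw [this, hab]
      have h4card : (b \ (a ∪ b')).card = 1 := by
        have : b \ (a ∪ b') = {f} := by
          ext x
          simp only [hb', Finset.mem_sdiff, Finset.mem_union, Finset.mem_erase,
            Finset.mem_singleton]
          constructor
          · rintro ⟨hxb, hx⟩
            push_neg at hx
            by_contra hxf
            exact (hx.2 hxf hxb).elim
          · rintro rfl
            exact ⟨hfb, by tauto⟩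
        rw [this, Finset.card_singleton]
      have h2 := IH 1 (by omega) (a ∪ b') b h3card h4card
      -- rewrite intersections/unions
      have e1 : a ∩ b' = a ∩ b := by
        ext x
        simp only [hb', Finset.mem_inter, Finset.mem_erase]
        constructor
        · rintro ⟨hxa, _, hxb⟩; exact ⟨hxa, hxb⟩
        · rintro ⟨hxa, hxb⟩; exact ⟨hxa, fun h => hfa (h ▸ hxa), hxb⟩
      have e2 : (a ∪ b') ∩ b = b' := by
        ext x
        simp only [hb', Finset.mem_inter, Finset.mem_union, Finset.mem_erase]
        constructor
        · rintro ⟨hx | ⟨h1, h2⟩, hxb⟩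
          · exact ⟨fun h => hfa (h ▸ hx), hxb⟩
          · exact ⟨h1, hxb⟩
        · rintro ⟨h1, h2⟩; exact ⟨Or.inr ⟨h1, h2⟩, h2⟩
      have e3 : (a ∪ b') ∪ b = a ∪ b := by
        ext x
        simp only [hb', Finset.mem_union, Finset.mem_erase]
        tauto
      rw [e1] at h1
      rw [e2, e3] at h2
      -- combine: cancel μ b' * μ (a ∪ b')
      have hc : (0 : ℝ) < μ b' * μ (a ∪ b') := mul_pos (hpos _) (hpos _)
      have key := mul_le_mul h1 h2 (mul_nonneg (hpos _).le (hpos _).le) (mul_nonneg (hpos _).le (hpos _).le)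
      refine le_of_mul_le_mul_left ?_ hc
      nlinarith [key, (hpos (a ∩ b)).le, (hpos (a ∪ b)).le, (hpos a).le, (hpos b).le,
        (hpos b').le, (hpos (a ∪ b')).le]

/-- Pairwise FKG condition implies full log-supermodularity. -/
private lemma pairwise_to_full (μ : Finset E → ℝ) (hpos : ∀ ω, 0 < μ ω)
    (hp : ∀ (ω : Finset E) (e f : E), e ≠ f →
        μ (insert e (ω.erase f)) * μ (insert f (ω.erase e)) ≤
          μ (insert e (insert f ω)) * μ ((ω.erase e).erase f)) :
    ∀ a b : Finset E, μ a * μ b ≤ μ (a ∩ b) * μ (a ∪ b) := by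
  suffices h : ∀ (n : ℕ) (a b : Finset E), (a \ b).card = n →
      μ a * μ b ≤ μ (a ∩ b) * μ (a ∪ b) by
    intro a b; exact h _ a b rfl
  intro n
  induction n using Nat.strong_induction_on with
  | _ n IH =>
    intro a b hab
    match n, hab with
    | 0, hab =>
      have hsub : a ⊆ b := by
        intro x hx
        by_contra hxb
        have : x ∈ a \ b := Finset.mem_sdiff.2 ⟨hx, hxb⟩
        simp [Finset.card_eq_zero.1 hab] at this
      rw [Finset.inter_eq_left.2 hsub, Finset.union_eq_right.2 hsub]
    | 1, hab =>
      exact pairwise_to_full_one μ hpos hp _ a b hab rfl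
    | (n + 2), hab =>
      have hne : (a \ b).Nonempty := by
        rw [← Finset.card_pos, hab]; omega
      obtain ⟨e, hemem⟩ := hne
      obtain ⟨hea, heb⟩ := Finset.mem_sdiff.1 hemem
      set a' := a.erase e with ha'
      have h1card : (a' \ b).card = n + 1 := by
        have : a' \ b = (a \ b).erase e := by
          ext x; simp only [ha', Finset.mem_sdiff, Finset.mem_erase]; tauto
        rw [this, Finset.card_erase_of_mem hemem, hab]
        omega
      have h1 := IH (n + 1) (by omega) a' b h1card
      have h2card : (a \ (a' ∪ b)).card = 1 := by
        have : a \ (a' ∪ b) = {e} := by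
          ext x
          simp only [ha', Finset.mem_sdiff, Finset.mem_union, Finset.mem_erase,
            Finset.mem_singleton]
          constructor
          · rintro ⟨hxa, hx⟩
            push_neg at hx
            by_contra hxe
            exact (hx.1 hxe hxa).elim
          · rintro rfl
            exact ⟨hea, by tauto⟩
        rw [this, Finset.card_singleton]
      have h2 := IH 1 (by omega) a (a' ∪ b) h2card
      have e1 : a' ∩ b = a ∩ b := by
        ext x
        simp only [ha', Finset.mem_inter, Finset.mem_erase]
        constructor
        · rintro ⟨⟨_, hxa⟩, hxb⟩; exact ⟨hxa, hxb⟩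
        · rintro ⟨hxa, hxb⟩; exact ⟨⟨fun h => heb (h ▸ hxb), hxa⟩, hxb⟩
      have e2 : a ∩ (a' ∪ b) = a' := by
        ext x
        simp only [ha', Finset.mem_inter, Finset.mem_union, Finset.mem_erase]
        constructor
        · rintro ⟨hxa, ⟨h1, _⟩ | hxb⟩
          · exact ⟨h1, hxa⟩
          · exact ⟨fun h => heb (h ▸ hxb), hxa⟩
        · rintro ⟨h1, h2⟩; exact ⟨h2, Or.inl ⟨h1, h2⟩⟩
      have e3 : a ∪ (a' ∪ b) = a ∪ b := by
        ext x
        simp only [ha', Finset.mem_union, Finset.mem_erase]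
        tauto
      rw [e1] at h1
      rw [e2, e3] at h2
      have hc : (0 : ℝ) < μ a' * μ (a' ∪ b) := mul_pos (hpos _) (hpos _)
      have key := mul_le_mul h1 h2 (mul_nonneg (hpos _).le (hpos _).le) (mul_nonneg (hpos _).le (hpos _).le)
      refine le_of_mul_le_mul_left ?_ hc
      nlinarith [key]

/-- Main lemma: Holley condition assuming `μ₂` is fully log-supermodular. -/
private lemma holley_of_full₂ (μ₁ μ₂ : Finset E → ℝ)
    (hpos₁ : ∀ ω, 0 < μ₁ ω) (hpos₂ : ∀ ω, 0 < μ₂ ω)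
    (hone : ∀ (ω : Finset E) (e : E),
      μ₁ (insert e ω) * μ₂ (ω.erase e) ≤ μ₂ (insert e ω) * μ₁ (ω.erase e))
    (hfull : ∀ a b : Finset E, μ₂ a * μ₂ b ≤ μ₂ (a ∩ b) * μ₂ (a ∪ b)) :
    ∀ ω₁ ω₂ : Finset E, μ₁ ω₁ * μ₂ ω₂ ≤ μ₂ (ω₁ ∪ ω₂) * μ₁ (ω₁ ∩ ω₂) := by
  suffices h : ∀ (n : ℕ) (ω₁ ω₂ : Finset E), (ω₁ \ ω₂).card = n →
      μ₁ ω₁ * μ₂ ω₂ ≤ μ₂ (ω₁ ∪ ω₂) * μ₁ (ω₁ ∩ ω₂) by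
    intro ω₁ ω₂; exact h _ ω₁ ω₂ rfl
  intro n
  induction n using Nat.strong_induction_on with
  | _ n IH =>
    intro a b hab
    match n, hab with
    | 0, hab =>
      have hsub : a ⊆ b := by
        intro x hx
        by_contra hxb
        have : x ∈ a \ b := Finset.mem_sdiff.2 ⟨hx, hxb⟩
        simp [Finset.card_eq_zero.1 hab] at this
      rw [Finset.inter_eq_left.2 hsub, Finset.union_eq_right.2 hsub, mul_comm]
    | 1, hab =>
      obtain ⟨e, he⟩ := Finset.card_eq_one.1 hab
      obtain ⟨hea, heb⟩ := mem_of_sdiff_singleton he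
      have hζ : a.erase e = a ∩ b := erase_eq_inter he
      -- one-edge condition at (a, e)
      have h1 := hone a e
      rw [Finset.insert_eq_self.2 hea, hζ] at h1
      -- h1 : μ₁ a * μ₂ (a ∩ b) ≤ μ₂ a * μ₁ (a ∩ b)
      have h2 := hfull a b
      -- combine: cancel μ₂ a * μ₂ (a ∩ b)
      have hc : (0 : ℝ) < μ₂ a * μ₂ (a ∩ b) := mul_pos (hpos₂ _) (hpos₂ _)
      have key := mul_le_mul h1 h2 (mul_nonneg (hpos₂ _).le (hpos₂ _).le) (mul_nonneg (hpos₂ _).le (hpos₁ _).le)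
      refine le_of_mul_le_mul_left ?_ hc
      nlinarith [key]
    | (n + 2), hab =>
      have hne : (a \ b).Nonempty := by
        rw [← Finset.card_pos, hab]; omega
      obtain ⟨e, hemem⟩ := hne
      obtain ⟨hea, heb⟩ := Finset.mem_sdiff.1 hemem
      set a' := a.erase e with ha'
      have h1card : (a' \ b).card = n + 1 := by
        have : a' \ b = (a \ b).erase e := by
          ext x; simp only [ha', Finset.mem_sdiff, Finset.mem_erase]; tauto
        rw [this, Finset.card_erase_of_mem hemem, hab]
        omega
      have h1 := IH (n + 1) (by omega) a' b h1card
      have h2card : (a \ (a' ∪ b)).card = 1 := by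
        have : a \ (a' ∪ b) = {e} := by
          ext x
          simp only [ha', Finset.mem_sdiff, Finset.mem_union, Finset.mem_erase,
            Finset.mem_singleton]
          constructor
          · rintro ⟨hxa, hx⟩
            push_neg at hx
            by_contra hxe
            exact (hx.1 hxe hxa).elim
          · rintro rfl
            exact ⟨hea, by tauto⟩
        rw [this, Finset.card_singleton]
      have h2 := IH 1 (by omega) a (a' ∪ b) h2card
      have e1 : a' ∩ b = a ∩ b := by
        ext x
        simp only [ha', Finset.mem_inter, Finset.mem_erase]
        constructor
        · rintro ⟨⟨_, hxa⟩, hxb⟩; exact ⟨hxa, hxb⟩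
        · rintro ⟨hxa, hxb⟩; exact ⟨⟨fun h => heb (h ▸ hxb), hxa⟩, hxb⟩
      have e2 : a ∩ (a' ∪ b) = a' := by
        ext x
        simp only [ha', Finset.mem_inter, Finset.mem_union, Finset.mem_erase]
        constructor
        · rintro ⟨hxa, ⟨h1, _⟩ | hxb⟩
          · exact ⟨h1, hxa⟩
          · exact ⟨fun h => heb (h ▸ hxb), hxa⟩
        · rintro ⟨h1, h2⟩; exact ⟨h2, Or.inl ⟨h1, h2⟩⟩
      have e3 : a ∪ (a' ∪ b) = a ∪ b := by
        ext x
        simp only [ha', Finset.mem_union, Finset.mem_erase]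
        tauto
      rw [e1] at h1
      rw [e2, e3] at h2
      have hc : (0 : ℝ) < μ₁ a' * μ₂ (a' ∪ b) := mul_pos (hpos₁ _) (hpos₂ _)
      have key := mul_le_mul h1 h2 (mul_nonneg (hpos₁ _).le (hpos₂ _).le) (mul_nonneg (hpos₂ _).le (hpos₁ _).le)
      refine le_of_mul_le_mul_left ?_ hc
      nlinarith [key]

end Aux

/-- **Holley.** Let `μ₁, μ₂` be strictly positive probability measures on
subsets of a finite edge set `E` satisfying the one-edge comparison condition, and
suppose one of them satisfies the FKG lattice condition. Then the Holley condition
holds, and consequently `μ₁` is stochastically dominated by `μ₂` (its mass on every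
increasing family of configurations is at most that of `μ₂`). -/
theorem holley_condition_and_stochastic_domination {E : Type*} [Fintype E]
    [DecidableEq E]
    (μ₁ μ₂ : Finset E → ℝ)
    (hpos₁ : ∀ ω : Finset E, 0 < μ₁ ω) (hpos₂ : ∀ ω : Finset E, 0 < μ₂ ω)
    (hsum₁ : ∑ ω : Finset E, μ₁ ω = 1) (hsum₂ : ∑ ω : Finset E, μ₂ ω = 1)
    (hone : ∀ (ω : Finset E) (e : E),
      μ₁ (insert e ω) * μ₂ (ω.erase e) ≤ μ₂ (insert e ω) * μ₁ (ω.erase e))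
    (hFKG : (∀ (ω : Finset E) (e f : E), e ≠ f →
        μ₁ (insert e (ω.erase f)) * μ₁ (insert f (ω.erase e)) ≤
          μ₁ (insert e (insert f ω)) * μ₁ ((ω.erase e).erase f)) ∨
      (∀ (ω : Finset E) (e f : E), e ≠ f →
        μ₂ (insert e (ω.erase f)) * μ₂ (insert f (ω.erase e)) ≤
          μ₂ (insert e (insert f ω)) * μ₂ ((ω.erase e).erase f))) :
    (∀ ω₁ ω₂ : Finset E, μ₁ ω₁ * μ₂ ω₂ ≤ μ₂ (ω₁ ∪ ω₂) * μ₁ (ω₁ ∩ ω₂)) ∧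
    (∀ A : Finset (Finset E), (∀ s t : Finset E, s ⊆ t → s ∈ A → t ∈ A) →
      ∑ ω ∈ A, μ₁ ω ≤ ∑ ω ∈ A, μ₂ ω) := by
  have holley_cond : ∀ ω₁ ω₂ : Finset E, μ₁ ω₁ * μ₂ ω₂ ≤ μ₂ (ω₁ ∪ ω₂) * μ₁ (ω₁ ∩ ω₂) := by
    rcases hFKG with hFKG | hFKG
    · -- μ₁ satisfies FKG: use the complementation trick
      set ν₁ : Finset E → ℝ := fun ω => μ₂ ωᶜ with hν₁
      set ν₂ : Finset E → ℝ := fun ω => μ₁ ωᶜ with hν₂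
      have hposν₁ : ∀ ω, 0 < ν₁ ω := fun ω => hpos₂ _
      have hposν₂ : ∀ ω, 0 < ν₂ ω := fun ω => hpos₁ _
      have hcompl_insert : ∀ (ω : Finset E) (e : E), (insert e ω)ᶜ = ωᶜ.erase e := by
        intro ω e; ext x; simp [Finset.mem_compl, Finset.mem_erase]
      have hcompl_erase : ∀ (ω : Finset E) (e : E), (ω.erase e)ᶜ = insert e ωᶜ := by
        intro ω e; ext x
        simp only [Finset.mem_compl, Finset.mem_erase, Finset.mem_insert]
        by_cases hxe : x = e <;> simp [hxe]
      have honeν : ∀ (ω : Finset E) (e : E),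
          ν₁ (insert e ω) * ν₂ (ω.erase e) ≤ ν₂ (insert e ω) * ν₁ (ω.erase e) := by
        intro ω e
        simp only [hν₁, hν₂, hcompl_insert, hcompl_erase]
        have := hone (ωᶜ) e
        linarith [this]
      have hfullν₂ : ∀ a b : Finset E, ν₂ a * ν₂ b ≤ ν₂ (a ∩ b) * ν₂ (a ∪ b) := by
        have hfull₁ := pairwise_to_full μ₁ hpos₁ hFKG
        intro a b
        simp only [hν₂]
        have h := hfull₁ (aᶜ) (bᶜ)
        have h1 : aᶜ ∩ bᶜ = (a ∪ b)ᶜ := by ext x; simp [Finset.mem_compl]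
        have h2 : aᶜ ∪ bᶜ = (a ∩ b)ᶜ := by ext x; simp [Finset.mem_compl]
        rw [h1, h2] at h
        linarith [h]
      have key := holley_of_full₂ ν₁ ν₂ hposν₁ hposν₂ honeν hfullν₂
      intro ω₁ ω₂
      have h := key (ω₂ᶜ) (ω₁ᶜ)
      have h1 : ω₂ᶜ ∪ ω₁ᶜ = (ω₁ ∩ ω₂)ᶜ := by ext x; simp [Finset.mem_compl]; tauto
      have h2 : ω₂ᶜ ∩ ω₁ᶜ = (ω₁ ∪ ω₂)ᶜ := by ext x; simp [Finset.mem_compl]; tauto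
      rw [h1, h2] at h
      simp only [hν₁, hν₂, compl_compl] at h
      linarith [h]
    · exact holley_of_full₂ μ₁ μ₂ hpos₁ hpos₂ hone
        (pairwise_to_full μ₂ hpos₂ hFKG)
  refine ⟨holley_cond, ?_⟩
  intro A hA
  -- apply Mathlib's Holley inequality with the indicator of A
  set χ : Finset E → ℝ := fun ω => if ω ∈ A then 1 else 0 with hχ
  have hχ₀ : 0 ≤ χ := by
    intro ω
    by_cases h : ω ∈ A <;> simp [hχ, h]
  have hχmono : Monotone χ := by
    intro s t hst
    by_cases hs : s ∈ A
    · simp [hχ, hs, hA s t hst hs]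
    · by_cases ht : t ∈ A <;> simp [hχ, hs, ht]
  have h := holley μ₁ μ₂ χ hχ₀ (fun ω => (hpos₁ ω).le) (fun ω => (hpos₂ ω).le) hχmono
    (hsum₁.trans hsum₂.symm) (fun a b => by
      have := holley_cond a b
      simp only [Finset.inf_eq_inter, Finset.sup_eq_union]
      linarith [this])
  have eq₁ : ∑ a : Finset E, χ a * μ₁ a = ∑ ω ∈ A, μ₁ ω := by
    simp only [hχ, ite_mul, one_mul, zero_mul]
    rw [Finset.sum_ite_mem, Finset.univ_inter]
  have eq₂ : ∑ a : Finset E, χ a * μ₂ a = ∑ ω ∈ A, μ₂ ω := by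
    simp only [hχ, ite_mul, one_mul, zero_mul]
    rw [Finset.sum_ite_mem, Finset.univ_inter]
  rw [eq₁, eq₂] at h
  exact h
end
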